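/- arXiv:1901.06665 — 3 statements merged into one kernel-verified Lean document; each statement's English description precedes it below -/
import Mathlib

section
/- Let L : ℝ³ × ℝ³ → ℝ³ be an ℝ-bilinear map such that L(q x, q y) = (det q) · q (L(x, y)) for all q ∈ O(3) and all x, y ∈ ℝ³. Then there exists c ∈ ℝ such that L(x, y) = c · (x × y) for all x, y ∈ ℝ³. -/
open Matrix

/-- The cross product on `ℝ³`. -/
def cross (x y : Fin 3 → ℝ) : Fin 3 → ℝ :=
  ![x 1 * y 2 - x 2 * y 1, x 2 * y 0 - x 0 * y 2, x 0 * y 1 - x 1 * y 0]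

/-!
Reflecting the coordinate axis `m` (an orthogonal matrix of determinant `-1`) fixes `eᵢ` and `eⱼ`
for `i, j ≠ m` and negates `L(eᵢ, eⱼ)` off the `m`-th coordinate, so `L(eᵢ, eⱼ)ₖ = 0` unless
`(i, j, k)` is a permutation of `(0, 1, 2)`. Permutation matrices then give
`L(eᵢ, eⱼ)ₖ = sign σ · L(e_{σi}, e_{σj})_{σk}`, so `L` is determined by the number `L(e₀, e₁)₂`.
The cross product satisfies the same equivariance, because `u ⬝ (x × y) = det [u, x, y]`;
hence `L` is `L(e₀, e₁)₂` times the cross product.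
-/

open Equiv

variable {ι R : Type*} [Fintype ι] [DecidableEq ι] [CommRing R]

variable (ι R) in
def pseudoEquivariantBilin : Submodule R ((ι → R) →ₗ[R] (ι → R) →ₗ[R] ι → R) where
  carrier := {L | ∀ q : Matrix ι ι R, qᵀ * q = 1 →
    ∀ x y, L (q *ᵥ x) (q *ᵥ y) = q.det • q *ᵥ L x y}
  add_mem' {L M} hL hM q hq x y := by
    simp only [LinearMap.add_apply, hL q hq, hM q hq, mulVec_add, smul_add]
  zero_mem' q _ x y := by simp
  smul_mem' c L hL q hq x y := by
    simp only [LinearMap.smul_apply, hL q hq, mulVec_smul, smul_comm c]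

def coordReflection (m : ι) : Matrix ι ι R := diagonal fun l => if l = m then -1 else 1

lemma coordReflection_transpose_mul_self (m : ι) :
    (coordReflection m : Matrix ι ι R)ᵀ * coordReflection m = 1 := by
  rw [coordReflection, diagonal_transpose, diagonal_mul_diagonal, ← diagonal_one]
  congr 1
  ext l
  split_ifs <;> simp

lemma det_coordReflection (m : ι) : (coordReflection m : Matrix ι ι R).det = -1 := by
  simp [coordReflection, det_diagonal, Finset.prod_ite_eq']

lemma coordReflection_mulVec_apply (m : ι) (v : ι → R) (k : ι) :
    (coordReflection m *ᵥ v) k = if k = m then -v k else v k := by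
  simp [coordReflection, mulVec_diagonal]

lemma coordReflection_mulVec_single {m i : ι} (hi : i ≠ m) :
    coordReflection m *ᵥ Pi.single i (1 : R) = Pi.single i 1 := by
  ext k
  rw [coordReflection_mulVec_apply]
  split_ifs with hk
  · simp [hk, hi]
  · rfl

lemma permMatrix_mulVec_single (σ : Perm ι) (i : ι) :
    σ.permMatrix R *ᵥ Pi.single i 1 = Pi.single (σ.symm i) 1 := by
  ext k
  simp only [permMatrix_mulVec, Function.comp_apply, Pi.single_apply, Equiv.eq_symm_apply]

lemma permMatrix_transpose_mul_self (σ : Perm ι) :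
    (σ.permMatrix R)ᵀ * σ.permMatrix R = 1 := by
  rw [transpose_permMatrix, ← permMatrix_mul, mul_inv_cancel, permMatrix_one]

omit [DecidableEq ι] in
lemma of_mulVec_eq_mul_transpose {κ : Type*} (A : Matrix κ ι R) (q : Matrix ι ι R) :
    of (fun i => q *ᵥ A i) = A * qᵀ := by
  ext i j
  simp [mul_apply, mulVec, dotProduct, mul_comm]

lemma Fin.exists_perm_apply_eq_zero_one_two :
    ∀ i j k : Fin 3, (∀ m, i ≠ m → j ≠ m → k = m) →
      ∃ σ : Perm (Fin 3), σ i = 0 ∧ σ j = 1 ∧ σ k = 2 := by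
  decide

namespace pseudoEquivariantBilin

variable {L : (ι → R) →ₗ[R] (ι → R) →ₗ[R] ι → R}

lemma apply_single_single_apply_eq_zero [IsAddTorsionFree R]
    (hL : L ∈ pseudoEquivariantBilin ι R) {i j k m : ι} (hi : i ≠ m) (hj : j ≠ m) (hk : k ≠ m) :
    L (Pi.single i 1) (Pi.single j 1) k = 0 := by
  have := congrFun (hL _ (coordReflection_transpose_mul_self m) (Pi.single i 1) (Pi.single j 1)) k
  rw [coordReflection_mulVec_single hi, coordReflection_mulVec_single hj, det_coordReflection,
    Pi.smul_apply, coordReflection_mulVec_apply, if_neg hk, neg_one_smul] at this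
  exact self_eq_neg.mp this

lemma apply_single_single_apply_perm (hL : L ∈ pseudoEquivariantBilin ι R) (σ : Perm ι)
    (i j k : ι) :
    L (Pi.single i 1) (Pi.single j 1) k =
      Perm.sign σ * L (Pi.single (σ i) 1) (Pi.single (σ j) 1) (σ k) := by
  have := congrFun (hL _ (permMatrix_transpose_mul_self σ) (Pi.single (σ i) 1)
    (Pi.single (σ j) 1)) k
  rwa [permMatrix_mulVec_single, permMatrix_mulVec_single, σ.symm_apply_apply, σ.symm_apply_apply,
    det_permutation, Pi.smul_apply, permMatrix_mulVec, Function.comp_apply,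
    smul_eq_mul] at this

lemma ext_of_apply_single_zero_single_one_two [IsAddTorsionFree R]
    {L M : (Fin 3 → R) →ₗ[R] (Fin 3 → R) →ₗ[R] Fin 3 → R}
    (hL : L ∈ pseudoEquivariantBilin (Fin 3) R) (hM : M ∈ pseudoEquivariantBilin (Fin 3) R)
    (h : L (Pi.single 0 1) (Pi.single 1 1) 2 = M (Pi.single 0 1) (Pi.single 1 1) 2) : L = M := by
  refine LinearMap.ext_basis (Pi.basisFun R (Fin 3)) (Pi.basisFun R (Fin 3))
    fun i j => funext fun k => ?_
  simp only [Pi.basisFun_apply]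
  by_cases hm : ∃ m, i ≠ m ∧ j ≠ m ∧ k ≠ m
  · obtain ⟨m, hi, hj, hk⟩ := hm
    rw [apply_single_single_apply_eq_zero hL hi hj hk,
      apply_single_single_apply_eq_zero hM hi hj hk]
  · push Not at hm
    obtain ⟨σ, hσi, hσj, hσk⟩ := Fin.exists_perm_apply_eq_zero_one_two i j k hm
    rw [apply_single_single_apply_perm hL σ, apply_single_single_apply_perm hM σ,
      hσi, hσj, hσk, h]

end pseudoEquivariantBilin

lemma crossProduct_mem_pseudoEquivariantBilin :
    crossProduct ∈ pseudoEquivariantBilin (Fin 3) R := by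
  intro q hq x y
  refine dotProduct_eq _ _ fun u => ?_
  set w := qᵀ *ᵥ u
  have hu : u = q *ᵥ w := by rw [mulVec_mulVec, mul_eq_one_comm.mp hq, one_mulVec]
  have rows : ![q *ᵥ w, q *ᵥ x, q *ᵥ y] = of ![w, x, y] * qᵀ := by
    rw [← of_mulVec_eq_mul_transpose]
    ext i : 1; fin_cases i <;> rfl
  calc (q *ᵥ x) ⨯₃ (q *ᵥ y) ⬝ᵥ u = u ⬝ᵥ (q *ᵥ x) ⨯₃ (q *ᵥ y) := dotProduct_comm _ _
    _ = (of ![w, x, y] * qᵀ).det := by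
      rw [triple_product_eq_det, hu, rows]
    _ = q.det * (w ⬝ᵥ x ⨯₃ y) := by
      rw [det_mul, det_transpose, triple_product_eq_det, mul_comm]; rfl
    _ = (q.det • q *ᵥ x ⨯₃ y) ⬝ᵥ u := by
      rw [smul_dotProduct, smul_eq_mul, dotProduct_comm (q *ᵥ _), dotProduct_mulVec,
        ← mulVec_transpose]

/-- Any bilinear map `L : ℝ³ × ℝ³ → ℝ³` satisfying `L(qx, qy) = (det q) · q L(x,y)` for all
orthogonal `q` is a scalar multiple of the cross product. -/
theorem stmt_0 (L : (Fin 3 → ℝ) →ₗ[ℝ] (Fin 3 → ℝ) →ₗ[ℝ] (Fin 3 → ℝ))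
    (hL : ∀ q : Matrix (Fin 3) (Fin 3) ℝ, qᵀ * q = 1 →
      ∀ x y : Fin 3 → ℝ, L (q.mulVec x) (q.mulVec y) = q.det • q.mulVec (L x y)) :
    ∃ c : ℝ, ∀ x y : Fin 3 → ℝ, L x y = c • cross x y := by
  let c := L (Pi.single 0 1) (Pi.single 1 1) 2
  have hc : L = c • crossProduct :=
    pseudoEquivariantBilin.ext_of_apply_single_zero_single_one_two hL
      (Submodule.smul_mem _ c crossProduct_mem_pseudoEquivariantBilin) (by simp [c, cross_apply])
  refine ⟨c, fun x y => ?_⟩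
  rw [hc]
  exact congrArg (c • ·) (cross_apply x y)
end

section
/- The ℝ-bilinear skew-symmetric bracket on ℝ³ × ℝ³ × 𝔰 × ℝ³ defined by [(x₁,y₁,S₁,z₁),(x₂,y₂,S₂,z₂)] = (0, x₁×x₂, x₁⊙y₂ − y₁⊙x₂, x₁×y₂ + y₁×x₂) satisfies the Jacobi identity; moreover [[[u₁,u₂],u₃],u₄] = 0 for all u₁,u₂,u₃,u₄, while there exist u, v, w with [[u,v],w] ≠ 0. Hence this bracket makes the 14-dimensional space ℝ³ × ℝ³ × 𝔰 × ℝ³ into a nilpotent Lie algebra of step exactly 3 (a model of the free nilpotent Lie algebra 𝖿[3,3] of rank 3 and step 3). -/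
open Matrix

/-- The symmetrized traceless product `x ⊙ y = (1/2)(y xᵀ + x yᵀ) − (⟨x,y⟩/3) I₃`. -/
noncomputable def odot (x y : Fin 3 → ℝ) : Matrix (Fin 3) (Fin 3) ℝ :=
  (1/2 : ℝ) • (vecMulVec y x + vecMulVec x y) - ((x ⬝ᵥ y) / 3) • (1 : Matrix (Fin 3) (Fin 3) ℝ)

/-- The underlying space `ℝ³ × ℝ³ × 𝔰 × ℝ³` of the free nilpotent Lie algebra `𝖿[3,3]`. -/
abbrev F14 := (Fin 3 → ℝ) × (Fin 3 → ℝ) × Matrix (Fin 3) (Fin 3) ℝ × (Fin 3 → ℝ)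

/-- The bracket `[(x₁,y₁,S₁,z₁),(x₂,y₂,S₂,z₂)] =
(0, x₁×x₂, x₁⊙y₂ − y₁⊙x₂, x₁×y₂ + y₁×x₂)` of `𝖿[3,3]`. -/
noncomputable def fBracket (u v : F14) : F14 :=
  ( 0,
    cross u.1 v.1,
    odot u.1 v.2.1 - odot u.2.1 v.1,
    cross u.1 v.2.1 + cross u.2.1 v.1 )


/-!
Grade `ℝ³ × ℝ³ × 𝔰 × ℝ³` by putting `x` in degree one, `y` in degree two and `(S, z)` in degree
three. The bracket has degree zero, so every double bracket `[[u, v], w]` only sees the degree-one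
parts `a, b, c` of `u, v, w`, and every triple bracket vanishes. The Jacobi identity then reduces to
the Jacobi identity of the cross product together with `∑_cyc (a × b) ⊙ c = 0`, which is the
traceless symmetric part of the adjugate identity `∑_cyc (a × b) cᵀ = ⟨a, b × c⟩ I₃`.
-/

lemma cross_eq_crossProduct (x y : Fin 3 → ℝ) : cross x y = x ⨯₃ y := rfl

lemma odot_zero_left (y : Fin 3 → ℝ) : odot 0 y = 0 := by
  simp [odot]

lemma cross_cross_add_cross_cross_add_cross_cross (a b c : Fin 3 → ℝ) :
    a ⨯₃ b ⨯₃ c + b ⨯₃ c ⨯₃ a + c ⨯₃ a ⨯₃ b = 0 := by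
  linear_combination (norm := module) cross_anticomm' (a ⨯₃ b) c + cross_anticomm' (b ⨯₃ c) a
    + cross_anticomm' (c ⨯₃ a) b - jacobi_cross c a b

lemma vecMulVec_cross_add_vecMulVec_cross_add_vecMulVec_cross (a b c : Fin 3 → ℝ) :
    vecMulVec (a ⨯₃ b) c + vecMulVec (b ⨯₃ c) a + vecMulVec (c ⨯₃ a) b
      = (a ⬝ᵥ b ⨯₃ c) • (1 : Matrix (Fin 3) (Fin 3) ℝ) := by
  ext i j
  simp only [Matrix.add_apply, vecMulVec_apply, Matrix.smul_apply, one_apply, cross_apply,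
    dotProduct, Fin.sum_univ_three]
  fin_cases i <;> fin_cases j <;> simp <;> ring

lemma odot_cross_add_odot_cross_add_odot_cross (a b c : Fin 3 → ℝ) :
    odot (a ⨯₃ b) c + odot (b ⨯₃ c) a + odot (c ⨯₃ a) b = 0 := by
  have h := vecMulVec_cross_add_vecMulVec_cross_add_vecMulVec_cross a b c
  have hT := congrArg transpose h
  simp only [transpose_add, transpose_vecMulVec, transpose_smul, transpose_one] at hT
  have hab : a ⨯₃ b ⬝ᵥ c = a ⬝ᵥ b ⨯₃ c := by
    rw [dotProduct_comm, triple_product_permutation, triple_product_permutation]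
  have hbc : b ⨯₃ c ⬝ᵥ a = a ⬝ᵥ b ⨯₃ c := dotProduct_comm _ _
  have hca : c ⨯₃ a ⬝ᵥ b = a ⬝ᵥ b ⨯₃ c := by
    rw [dotProduct_comm, triple_product_permutation a]
  simp only [odot]
  linear_combination (norm := module) (1 / 2 : ℝ) • h + (1 / 2 : ℝ) • hT
    - ((hab + hbc + hca) / 3) • (1 : Matrix (Fin 3) (Fin 3) ℝ)

lemma fBracket_of_fst_eq_zero {u : F14} (hu : u.1 = 0) (v : F14) :
    fBracket u v = (0, 0, -odot u.2.1 v.1, u.2.1 ⨯₃ v.1) := by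
  simp [fBracket, hu, cross_eq_crossProduct, odot_zero_left]

lemma fBracket_fBracket (u v w : F14) :
    fBracket (fBracket u v) w = (0, 0, -odot (u.1 ⨯₃ v.1) w.1, u.1 ⨯₃ v.1 ⨯₃ w.1) :=
  fBracket_of_fst_eq_zero rfl w

lemma fBracket_jacobi (u v w : F14) :
    fBracket (fBracket u v) w + fBracket (fBracket v w) u + fBracket (fBracket w u) v = 0 := by
  simp only [fBracket_fBracket, Prod.mk_add_mk, add_zero, ← neg_add,
    odot_cross_add_odot_cross_add_odot_cross, cross_cross_add_cross_cross_add_cross_cross, neg_zero]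
  rfl

lemma fBracket_fBracket_fBracket (u₁ u₂ u₃ u₄ : F14) :
    fBracket (fBracket (fBracket u₁ u₂) u₃) u₄ = 0 := by
  rw [fBracket_of_fst_eq_zero (by rw [fBracket_fBracket]) u₄, fBracket_fBracket]
  simp [odot_zero_left]

lemma fBracket_fBracket_ne_zero :
    fBracket (fBracket (Pi.single 0 1, 0, 0, 0) (Pi.single 1 1, 0, 0, 0)) (Pi.single 0 1, 0, 0, 0)
      ≠ 0 := by
  rw [fBracket_fBracket]
  intro h
  have h₁ := congrFun (congrArg (fun p : F14 => p.2.2.2) h) 1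
  simp [cross_apply] at h₁

/-- The bracket of `𝖿[3,3]` satisfies the Jacobi identity, all fourfold brackets vanish,
and some threefold bracket is nonzero: it defines a nilpotent Lie algebra of step exactly
three. -/
theorem stmt_6 :
    (∀ u v w : F14,
      fBracket (fBracket u v) w + fBracket (fBracket v w) u + fBracket (fBracket w u) v = 0)
    ∧ (∀ u₁ u₂ u₃ u₄ : F14, fBracket (fBracket (fBracket u₁ u₂) u₃) u₄ = 0)
    ∧ (∃ u v w : F14, fBracket (fBracket u v) w ≠ 0) :=
  ⟨fBracket_jacobi, fBracket_fBracket_fBracket, ⟨_, _, _, fBracket_fBracket_ne_zero⟩⟩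
end

section
/- Let a₁, a₂ ∈ ℝ with a₁² + 4a₂ > 0, and set k = (a₁ + √(a₁²+4a₂))/2 and k̂ = (a₁ − √(a₁²+4a₂))/2. Then the linear map ψ : 𝔤(a₁,a₂) → 𝔟_k × 𝔟_k̂ given by ψ(x,y,z,w) = ((x + k·z, w + k·y), (x + k̂·z, w + k̂·y)) is bijective and satisfies ψ([u,v]) = [ψ(u), ψ(v)] for all u, v ∈ 𝔤(a₁,a₂), where 𝔟_k × 𝔟_k̂ carries the componentwise (direct sum) bracket. -/
open Matrix

abbrev V3 := Fin 3 → ℝ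

/-- The underlying space `ℝ³ × ℝ³ × ℝ³ × ℝ³` of `𝔤(a₁, a₂)`. -/
abbrev G4 := V3 × V3 × V3 × V3

/-- The bracket of `𝔤(a₁, a₂)`, the Lie algebra of the isometry group of the
sub-Riemannian model space `𝖢₃,₃(a₁,a₂)`. -/
def gBracket (a₁ a₂ : ℝ) (u v : G4) : G4 :=
  let x₁ := u.1; let y₁ := u.2.1; let z₁ := u.2.2.1; let w₁ := u.2.2.2
  let x₂ := v.1; let y₂ := v.2.1; let z₂ := v.2.2.1; let w₂ := v.2.2.2
  ( cross w₁ x₂ + cross x₁ w₂ + a₂ • (cross y₁ z₂ + cross z₁ y₂),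
    cross w₁ y₂ + cross y₁ w₂ + cross x₁ x₂
      + a₁ • (cross x₁ z₂ + cross z₁ x₂ + cross y₁ y₂ + a₁ • cross z₁ z₂)
      + a₂ • cross z₁ z₂,
    cross w₁ z₂ + cross z₁ w₂ + cross x₁ y₂ + cross y₁ x₂ + a₁ • (cross y₁ z₂ + cross z₁ y₂),
    cross w₁ w₂ + a₂ • (cross x₁ z₂ + cross z₁ x₂ + cross y₁ y₂ + a₁ • cross z₁ z₂) )

/-- The bracket of `𝔟_k` on `ℝ³ × ℝ³`:
`[(x₁,y₁),(x₂,y₂)] = (x₁×y₂ + y₁×x₂, k·(x₁×x₂) + y₁×y₂)`. -/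
def bBracket (k : ℝ) (u v : V3 × V3) : V3 × V3 :=
  (cross u.1 v.2 + cross u.2 v.1, k • cross u.1 v.1 + cross u.2 v.2)

/-!
Each root `k` of `k² = a₁ k + a₂` gives a bracket-preserving map
`(x, y, z, w) ↦ (x + k z, w + k y)` from `𝔤(a₁, a₂)` to `𝔟_k`: expanding both sides, the
terms of the bracket of `𝔤(a₁, a₂)` regroup into those of `𝔟_k` once `a₂ = k² - a₁ k`. When the
discriminant is positive the two roots are distinct, and then the pair of maps is a bijection
because `(x, z) ↦ (x + k z, x + k̂ z)` is a Vandermonde system.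
-/

section Vandermonde

variable {K M : Type*} [Field K] [AddCommGroup M] [Module K M]

theorem bijective_add_smul_pair {k k' : K} (hk : k ≠ k') :
    Function.Bijective fun p : M × M => (p.1 + k • p.2, p.1 + k' • p.2) := by
  have hsub : k - k' ≠ 0 := sub_ne_zero.mpr hk
  refine ⟨fun p q hpq => ?_, fun b => ?_⟩
  · simp only [Prod.mk.injEq] at hpq
    have hz : p.2 = q.2 := by
      have : (k - k') • (p.2 - q.2) = 0 := by
        simp only [sub_smul, smul_sub]
        linear_combination (norm := module) hpq.1 - hpq.2
      exact sub_eq_zero.mp ((smul_eq_zero.mp this).resolve_left hsub)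
    have hx : p.1 = q.1 := by simpa [hz] using hpq.1
    exact Prod.ext hx hz
  · set z := (k - k')⁻¹ • (b.1 - b.2)
    have hz : (k - k') • z = b.1 - b.2 := smul_inv_smul₀ hsub _
    refine ⟨(b.1 - k • z, z), Prod.ext ?_ ?_⟩
    · simp
    · simp only [sub_smul] at hz
      linear_combination (norm := module) -hz

end Vandermonde

/-- The component `(x, y, z, w) ↦ (x + k z, w + k y)` of `ψ` with values in `𝔟_k`. -/
def gToB (k : ℝ) (u : G4) : V3 × V3 :=
  (u.1 + k • u.2.2.1, u.2.2.2 + k • u.2.1)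

theorem bijective_gToB_pair {k k' : ℝ} (hk : k ≠ k') :
    Function.Bijective fun u : G4 => (gToB k u, gToB k' u) := by
  obtain ⟨hinj, hsurj⟩ := bijective_add_smul_pair (M := V3) hk
  refine ⟨fun u v huv => ?_, fun b => ?_⟩
  · simp only [gToB, Prod.mk.injEq] at huv
    obtain ⟨⟨hx, hw⟩, hx', hw'⟩ := huv
    have hxz := hinj (a₁ := (u.1, u.2.2.1)) (a₂ := (v.1, v.2.2.1)) (Prod.ext hx hx')
    have hwy := hinj (a₁ := (u.2.2.2, u.2.1)) (a₂ := (v.2.2.2, v.2.1)) (Prod.ext hw hw')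
    simp only [Prod.mk.injEq] at hxz hwy
    exact Prod.ext hxz.1 (Prod.ext hwy.2 (Prod.ext hxz.2 hwy.1))
  · obtain ⟨⟨x, z⟩, hxz⟩ := hsurj (b.1.1, b.2.1)
    obtain ⟨⟨w, y⟩, hwy⟩ := hsurj (b.1.2, b.2.2)
    simp only [Prod.mk.injEq] at hxz hwy
    exact ⟨(x, y, z, w), by simp only [gToB, hxz, hwy]⟩

theorem gToB_gBracket {a₁ a₂ k : ℝ} (hk : k ^ 2 = a₁ * k + a₂) (u v : G4) :
    gToB k (gBracket a₁ a₂ u v) = bBracket k (gToB k u) (gToB k v) := by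
  obtain rfl : a₂ = k ^ 2 - a₁ * k := by linarith
  refine Prod.ext (funext fun i => ?_) (funext fun i => ?_) <;>
    fin_cases i <;>
    simp [gToB, bBracket, gBracket, cross] <;>
    ring

/-- If `a₁² + 4a₂ > 0` then `ψ(x,y,z,w) = ((x + k·z, w + k·y), (x + k̂·z, w + k̂·y))` is a
Lie algebra isomorphism `𝔤(a₁,a₂) → 𝔟_k ⊕ 𝔟_k̂`, where
`k = (a₁ + √(a₁²+4a₂))/2` and `k̂ = (a₁ − √(a₁²+4a₂))/2`. -/
theorem stmt_9 (a₁ a₂ : ℝ) (h : a₁ ^ 2 + 4 * a₂ > 0) :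
    let k := (a₁ + Real.sqrt (a₁ ^ 2 + 4 * a₂)) / 2
    let k' := (a₁ - Real.sqrt (a₁ ^ 2 + 4 * a₂)) / 2
    let ψ : G4 → (V3 × V3) × (V3 × V3) := fun u =>
      ((u.1 + k • u.2.2.1, u.2.2.2 + k • u.2.1), (u.1 + k' • u.2.2.1, u.2.2.2 + k' • u.2.1))
    Function.Bijective ψ ∧
      ∀ u v : G4, ψ (gBracket a₁ a₂ u v) =
        (bBracket k (ψ u).1 (ψ v).1, bBracket k' (ψ u).2 (ψ v).2) := by
  intro k k' ψ
  have hs_sq : Real.sqrt (a₁ ^ 2 + 4 * a₂) ^ 2 = a₁ ^ 2 + 4 * a₂ := Real.sq_sqrt h.le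
  have hs_pos : 0 < Real.sqrt (a₁ ^ 2 + 4 * a₂) := Real.sqrt_pos.mpr h
  have hk : k ^ 2 = a₁ * k + a₂ := by linear_combination hs_sq / 4
  have hk' : k' ^ 2 = a₁ * k' + a₂ := by linear_combination hs_sq / 4
  have hne : k ≠ k' := by
    change (a₁ + _) / 2 ≠ (a₁ - _) / 2
    linarith
  exact ⟨bijective_gToB_pair hne, fun u v =>
    Prod.ext (gToB_gBracket hk u v) (gToB_gBracket hk' u v)⟩
end
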